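/- Let T be a Souslin tree with the interval topology. Then for every stationary S ⊆ ω₁ and every uncountable A ⊆ T, there exists γ ∈ S such that the closure of A in T intersects level γ of T. -/

import Mathlib

noncomputable def omega1 : Ordinal := (Cardinal.aleph 1).ord

/-- `C` is a club (closed unbounded set) in `ω₁`. -/
def IsClubInOmega1 (C : Set Ordinal) : Prop :=
  C ⊆ Set.Iio omega1 ∧
  (∀ o < omega1, ∃ c ∈ C, o ≤ c) ∧
  (∀ o, o < omega1 → Order.IsSuccLimit o → (∀ p < o, ∃ c ∈ C, p < c ∧ c < o) → o ∈ C)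

/-- `S ⊆ ω₁` is stationary: it meets every club in `ω₁`. -/
def IsStationaryInOmega1 (S : Set Ordinal) : Prop :=
  S ⊆ Set.Iio omega1 ∧ ∀ C, IsClubInOmega1 C → (S ∩ C).Nonempty

/-- Data exhibiting a partial order `T` as a Souslin tree of height `ω₁`:
the predecessors of any point form a chain enumerated by the height function,
there is a point at every level `β < ω₁`, and all levels, chains and
antichains are countable. -/
structure SouslinTreeData (T : Type*) [PartialOrder T] where
  height : T → Ordinal.{v}
  height_lt : ∀ t, height t < omega1
  height_mono : ∀ s t : T, s < t → height s < height t
  pred_linear : ∀ t s₁ s₂ : T, s₁ < t → s₂ < t → s₁ ≤ s₂ ∨ s₂ ≤ s₁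
  pred_exists : ∀ t : T, ∀ β < height t, ∃ s, s < t ∧ height s = β
  height_surj : ∀ β < omega1, ∃ t : T, height t = β
  levels_countable : ∀ β : Ordinal, {t : T | height t = β}.Countable
  chains_countable : ∀ C : Set T, IsChain (· ≤ ·) C → C.Countable
  antichains_countable : ∀ A : Set T,
    (A.Pairwise fun a b => ¬ a ≤ b ∧ ¬ b ≤ a) → A.Countable

/-- The interval topology on a tree, generated by the half-open intervals
`(s, t]` together with the singletons of minimal elements. -/
def intervalTopology (T : Type*) [PartialOrder T] : TopologicalSpace T :=
  TopologicalSpace.generateFrom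
    ({U | ∃ s t : T, U = {x | s < x ∧ x ≤ t}} ∪
     {U | ∃ t : T, (∀ s, ¬ s < t) ∧ U = {t}})

/-!
Suppose the closure of `A` misses every level in `S`. For `γ ∈ S` pick `a γ ∈ A` above level `γ`
and let `x γ` be its predecessor on level `γ`; as `x γ ∉ closure A`, some `s γ < x γ` leaves a gap
`(s γ, x γ]` disjoint from `A`. The map `γ ↦ height (s γ)` is regressive, so by Fodor's lemma it is
constant, say `β`, on a stationary, hence uncountable, set `Γ ⊆ S`. For `γ, γ' ∈ Γ` with
`a γ' ≤ a γ` the bases `s γ'` and `s γ` are then equal, and `a γ'` cannot lie in the gap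
`(s γ, x γ]`, so `γ ≤ height (a γ')`. Thus each `a γ'` is comparable with only countably many of
the points `a γ`; as antichains are countable, there are only countably many such points, and
each of them is `a γ` for only countably many `γ`, contradicting that `Γ` is uncountable.
-/

open Ordinal Cardinal Set Order

theorem omega1_eq_omega_one : omega1 = ω₁ := ord_aleph 1

theorem isSuccLimit_omega1 : IsSuccLimit omega1 := omega1_eq_omega_one ▸ isSuccLimit_omega 1

theorem countable_Iio_of_lt_omega1 {o : Ordinal} (ho : o < omega1) : (Iio o).Countable := by
  rw [← le_aleph0_iff_set_countable, Cardinal.mk_Iio_ordinal, lift_le_aleph0, ← lt_aleph_one_iff]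
  exact lt_ord.mp ho

theorem countable_Iic_of_lt_omega1 {o : Ordinal} (ho : o < omega1) : (Iic o).Countable :=
  (countable_Iio_of_lt_omega1 (isSuccLimit_omega1.succ_lt ho)).mono
    (Iic_subset_Iio.mpr (lt_succ o))

theorem iSup_lt_omega1 {ι : Type*} [Countable ι] {f : ι → Ordinal} (hf : ∀ i, f i < omega1) :
    ⨆ i, f i < omega1 := by
  rw [omega1_eq_omega_one] at hf ⊢
  exact iSup_lt_omega_one hf

theorem exists_isSuccLimit_forall_lt_of_lt_omega1 (g : Ordinal → Ordinal)
    (hg : ∀ p < omega1, g p < omega1) {o : Ordinal} (ho : o < omega1) :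
    ∃ δ < omega1, o < δ ∧ IsSuccLimit δ ∧ ∀ p < δ, g p < δ := by
  let h : Ordinal → Ordinal := fun q => succ (q ⊔ ⨆ p : Iio q, g p)
  have lt_h : ∀ q, q < h q := fun q => lt_succ_of_le le_sup_left
  have g_lt_h : ∀ q, ∀ p < q, g p < h q := fun q p hp => lt_succ_of_le
    (le_sup_of_le_right (Ordinal.le_iSup (fun p : Iio q => g p) ⟨p, hp⟩))
  have h_lt : ∀ q < omega1, h q < omega1 := fun q hq => isSuccLimit_omega1.succ_lt
    (sup_lt_iff.mpr ⟨hq, by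
      have := (countable_Iio_of_lt_omega1 hq).to_subtype
      exact iSup_lt_omega1 fun p => hg p (p.2.trans hq)⟩)
  have lt_nfp : ∀ p < nfp h (succ o), ∃ n, p < h^[n] (succ o) := fun p => lt_nfp_iff.mp
  have ho_lt : o < nfp h (succ o) := (lt_succ o).trans_le (le_nfp h _)
  refine ⟨nfp h (succ o), nfp_lt_ord ?_ h_lt (isSuccLimit_omega1.succ_lt ho), ho_lt,
    isSuccLimit_iff.mpr ⟨ho_lt.ne_bot, isSuccPrelimit_of_succ_lt fun p hp => ?_⟩, fun p hp => ?_⟩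
  · rw [omega1_eq_omega_one, cof_omega_one]
    exact aleph0_lt_aleph_one
  · obtain ⟨n, hn⟩ := lt_nfp p hp
    calc succ p ≤ h^[n] (succ o) := succ_le_of_lt hn
      _ < h^[n + 1] (succ o) := by rw [Function.iterate_succ_apply']; exact lt_h _
      _ ≤ nfp h (succ o) := iterate_le_nfp h _ _
  · obtain ⟨n, hn⟩ := lt_nfp p hp
    calc g p < h^[n + 1] (succ o) := by rw [Function.iterate_succ_apply']; exact g_lt_h _ p hn
      _ ≤ nfp h (succ o) := iterate_le_nfp h _ _

theorem exists_lt_omega1_forall_lt_of_countable {s : Set Ordinal} (hs : s.Countable)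
    (hs' : s ⊆ Iio omega1) : ∃ b < omega1, ∀ x ∈ s, x < b := by
  have := hs.to_subtype
  exact ⟨⨆ x : s, succ x.1, iSup_lt_omega1 fun x => isSuccLimit_omega1.succ_lt (hs' x.2),
    fun x hx => (lt_succ x).trans_le (Ordinal.le_iSup (fun x : s => succ x.1) ⟨x, hx⟩)⟩

theorem isClubInOmega1_Ioo {b : Ordinal} (hb : b < omega1) : IsClubInOmega1 (Ioo b omega1) :=
  ⟨fun _ h => h.2,
    fun o ho => ⟨succ (o ⊔ b), ⟨lt_succ_of_le le_sup_right,
      isSuccLimit_omega1.succ_lt (sup_lt_iff.mpr ⟨ho, hb⟩)⟩, le_sup_left.trans (le_succ _)⟩,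
    fun o ho hlim happ => by
      obtain ⟨c, hc, -, hco⟩ := happ 0 hlim.pos
      exact ⟨hc.1.trans hco, ho⟩⟩

theorem isClubInOmega1_diagonal (C : Ordinal → Set Ordinal) (hC : ∀ β, IsClubInOmega1 (C β)) :
    IsClubInOmega1 {γ | γ < omega1 ∧ 0 < γ ∧ ∀ β < γ, γ ∈ C β} := by
  have pick : ∀ β, ∀ p < omega1, ∃ c ∈ C β, p < c := fun β p hp =>
    let ⟨c, hc, hpc⟩ := (hC β).2.1 _ (isSuccLimit_omega1.succ_lt hp)
    ⟨c, hc, succ_le_iff.mp hpc⟩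
  choose! c hcC hpc using pick
  refine ⟨fun _ h => h.1, fun o ho => ?_, fun o ho hlim happ => ⟨ho, hlim.pos, fun β hβ => ?_⟩⟩
  · obtain ⟨δ, hδ, hoδ, hlim, hclosed⟩ := exists_isSuccLimit_forall_lt_of_lt_omega1
      (fun p => ⨆ β : Iic p, c β p) (fun p hp => by
        have := (countable_Iic_of_lt_omega1 hp).to_subtype
        exact iSup_lt_omega1 fun β => (hC β).1 (hcC β p hp)) ho
    refine ⟨δ, ⟨hδ, hlim.pos, fun β hβ => (hC β).2.2 δ hδ hlim fun p hp => ?_⟩, hoδ.le⟩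
    have hq : β ⊔ p < δ := sup_lt_iff.mpr ⟨hβ, hp⟩
    have hqω : β ⊔ p < omega1 := hq.trans hδ
    refine ⟨c β (β ⊔ p), hcC β _ hqω, le_sup_right.trans_lt (hpc β _ hqω), ?_⟩
    exact (Ordinal.le_iSup (fun β' : Iic (β ⊔ p) => c β' (β ⊔ p))
      ⟨β, mem_Iic.mpr le_sup_left⟩).trans_lt (hclosed _ hq)
  · refine (hC β).2.2 o ho hlim fun p hp => ?_
    obtain ⟨γ, ⟨-, -, hγ⟩, hγp, hγo⟩ := happ (p ⊔ β) (sup_lt_iff.mpr ⟨hp, hβ⟩)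
    exact ⟨γ, hγ β (le_sup_right.trans_lt hγp), le_sup_left.trans_lt hγp, hγo⟩

theorem IsStationaryInOmega1.not_countable {S : Set Ordinal} (hS : IsStationaryInOmega1 S) :
    ¬ S.Countable := fun hc => by
  obtain ⟨b, hb, hSb⟩ := exists_lt_omega1_forall_lt_of_countable hc hS.1
  obtain ⟨γ, hγS, hγ⟩ := hS.2 _ (isClubInOmega1_Ioo hb)
  exact (hSb γ hγS).asymm hγ.1

theorem IsStationaryInOmega1.exists_isStationaryInOmega1_fiber {S : Set Ordinal}
    (hS : IsStationaryInOmega1 S) (f : Ordinal → Ordinal) (hf : ∀ γ ∈ S, 0 < γ → f γ < γ) :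
    ∃ β, IsStationaryInOmega1 {γ | γ ∈ S ∧ 0 < γ ∧ f γ = β} := by
  by_contra! h
  have club : ∀ β, ∃ C, IsClubInOmega1 C ∧ {γ | γ ∈ S ∧ 0 < γ ∧ f γ = β} ∩ C = ∅ := fun β => by
    have := not_and.mp (h β) fun γ hγ => hS.1 hγ.1
    push Not at this
    exact this
  choose C hC hCF using club
  obtain ⟨γ, hγS, -, hγ0, hγC⟩ := hS.2 _ (isClubInOmega1_diagonal C hC)
  exact (hCF (f γ)).subset ⟨⟨hγS, hγ0, rfl⟩, hγC _ (hf γ hγS hγ0)⟩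

theorem Set.countable_of_countable_antichains_of_countable_comparables {α : Type*} [Preorder α]
    {B : Set α} (hanti : ∀ M ⊆ B, IsAntichain (· ≤ ·) M → M.Countable)
    (hcomp : ∀ b ∈ B, {c ∈ B | b ≤ c ∨ c ≤ b}.Countable) : B.Countable := by
  obtain ⟨M, ⟨hMB, hM⟩, hmax⟩ := zorn_subset {M | M ⊆ B ∧ IsAntichain (· ≤ ·) M}
    fun c hc hchain => ⟨⋃₀ c, ⟨sUnion_subset fun M hM => (hc hM).1,
      hchain.pairwise_sUnion.mpr fun M hM => (hc hM).2⟩, fun _ => subset_sUnion_of_mem⟩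
  have hcover : ∀ b ∈ B, ∃ m ∈ M, m ≤ b ∨ b ≤ m := by
    intro b hb
    by_contra! hbM
    have hins : IsAntichain (· ≤ ·) (insert b M) :=
      hM.insert (fun m hm _ => (hbM m hm).1) (fun m hm _ => (hbM m hm).2)
    have hbM' : b ∈ M := hmax ⟨insert_subset hb hMB, hins⟩ (subset_insert b M) (mem_insert b M)
    exact (hbM b hbM').1 le_rfl
  refine ((hanti M hMB hM).biUnion fun m hm => hcomp m (hMB hm)).mono fun b hb => ?_
  obtain ⟨m, hm, hmb⟩ := hcover b hb
  exact mem_biUnion hm ⟨hb, hmb⟩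

namespace SouslinTreeData

variable {T : Type*} [PartialOrder T]

protected theorem nonempty (τ : SouslinTreeData T) : Nonempty T :=
  let ⟨t, _⟩ := τ.height_surj 0 isSuccLimit_omega1.pos
  ⟨t⟩

theorem height_monotone (τ : SouslinTreeData T) : Monotone τ.height := fun s t hst =>
  hst.eq_or_lt.elim (fun h => h ▸ le_rfl) fun h => (τ.height_mono s t h).le

theorem eq_of_lt_of_lt_of_height_eq (τ : SouslinTreeData T) {s₁ s₂ t : T} (h₁ : s₁ < t)
    (h₂ : s₂ < t) (h : τ.height s₁ = τ.height s₂) : s₁ = s₂ := by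
  rcases τ.pred_linear t s₁ s₂ h₁ h₂ with h' | h'
  · exact h'.eq_of_not_lt fun hlt => (τ.height_mono _ _ hlt).ne h
  · exact (h'.eq_of_not_lt fun hlt => (τ.height_mono _ _ hlt).ne h.symm).symm

theorem countable_Iic (τ : SouslinTreeData T) (t : T) : (Iic t).Countable := by
  rw [← Iio_insert]
  exact (τ.chains_countable _ fun s₁ h₁ s₂ h₂ _ => τ.pred_linear t s₁ s₂ h₁ h₂).insert t

theorem exists_lt_height_of_not_countable (τ : SouslinTreeData T) {A : Set T}
    (hA : ¬ A.Countable) {γ : Ordinal} (hγ : γ < omega1) : ∃ a ∈ A, γ < τ.height a := by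
  by_contra! h
  exact hA (((countable_Iic_of_lt_omega1 hγ).biUnion fun β _ => τ.levels_countable β).mono
    fun a ha => mem_biUnion (h a ha) rfl)

theorem exists_Ioc_subset_of_isOpen (τ : SouslinTreeData T) {U : Set T}
    (hU : @IsOpen T (intervalTopology T) U) {s₀ x : T} (hs₀ : s₀ < x) (hx : x ∈ U) :
    ∃ s < x, Ioc s x ⊆ U := by
  induction hU with
  | basic V hV =>
    rcases hV with ⟨s, t, rfl⟩ | ⟨t, ht, rfl⟩
    · exact ⟨s, hx.1, fun y hy => ⟨hy.1, hy.2.trans hx.2⟩⟩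
    · exact absurd (hx ▸ hs₀) (ht s₀)
  | univ => exact ⟨s₀, hs₀, subset_univ _⟩
  | inter V W _ _ ihV ihW =>
    obtain ⟨s₁, hs₁, h₁⟩ := ihV hx.1
    obtain ⟨s₂, hs₂, h₂⟩ := ihW hx.2
    rcases τ.pred_linear x s₁ s₂ hs₁ hs₂ with h | h
    · exact ⟨s₂, hs₂, subset_inter ((Ioc_subset_Ioc_left h).trans h₁) h₂⟩
    · exact ⟨s₁, hs₁, subset_inter h₁ ((Ioc_subset_Ioc_left h).trans h₂)⟩
  | sUnion 𝒮 _ ih =>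
    obtain ⟨V, hV𝒮, hxV⟩ := hx
    obtain ⟨s, hs, h⟩ := ih V hV𝒮 hxV
    exact ⟨s, hs, h.trans (subset_sUnion_of_mem hV𝒮)⟩

theorem exists_Ioc_subset_compl_of_notMem_closure (τ : SouslinTreeData T) {A : Set T}
    {s₀ x : T} (hs₀ : s₀ < x) (hx : x ∉ @closure T (intervalTopology T) A) :
    ∃ s < x, Ioc s x ⊆ Aᶜ := by
  let := intervalTopology T
  obtain ⟨s, hs, hsub⟩ := τ.exists_Ioc_subset_of_isOpen isClosed_closure.isOpen_compl hs₀ hx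
  exact ⟨s, hs, hsub.trans (compl_subset_compl.mpr subset_closure)⟩

theorem height_le_of_le_of_Ioc_subset_compl (τ : SouslinTreeData T) {A : Set T}
    {s x a s' a' : T} (hsx : s < x) (hxa : x < a) (hgap : Ioc s x ⊆ Aᶜ)
    (hs' : τ.height s' = τ.height s) (hs'a' : s' < a') (ha' : a' ∈ A) (h : a' ≤ a) :
    τ.height x ≤ τ.height a' := by
  obtain rfl : s' = s := τ.eq_of_lt_of_lt_of_height_eq (hs'a'.trans_le h) (hsx.trans hxa) hs'
  rcases h.eq_or_lt with rfl | h
  · exact (τ.height_mono _ _ hxa).le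
  rcases τ.pred_linear a a' x h hxa with h' | h'
  · exact absurd ha' (hgap ⟨hs'a', h'⟩)
  · exact τ.height_monotone h'

theorem countable_of_forall_exists_Ioc_subset_compl (τ : SouslinTreeData T) {A : Set T}
    {β : Ordinal} {Γ : Set Ordinal} (hΓ : ∀ γ ∈ Γ, ∃ s x a, τ.height s = β ∧ s < x ∧ x < a ∧
      τ.height x = γ ∧ a ∈ A ∧ Ioc s x ⊆ Aᶜ) : Γ.Countable := by
  have := τ.nonempty
  choose! s x a hs hsx hxa hx ha hgap using hΓ
  have hγa : ∀ γ ∈ Γ, γ < τ.height (a γ) := fun γ hγ =>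
    (hx γ hγ).symm.trans_lt (τ.height_mono _ _ (hxa γ hγ))
  -- Below `a γ'` lies a chain; above it only points `a γ` with `γ ≤ height (a γ')`.
  have hcomp : ∀ b ∈ a '' Γ, {c ∈ a '' Γ | b ≤ c ∨ c ≤ b}.Countable := by
    rintro _ ⟨γ', hγ', rfl⟩
    refine ((τ.countable_Iic (a γ')).union
      ((countable_Iic_of_lt_omega1 (τ.height_lt (a γ'))).image a)).mono ?_
    rintro _ ⟨⟨γ, hγ, rfl⟩, hle | hle⟩
    · refine Or.inr ⟨γ, (hx γ hγ).symm.trans_le ?_, rfl⟩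
      exact τ.height_le_of_le_of_Ioc_subset_compl (hsx γ hγ) (hxa γ hγ) (hgap γ hγ)
        ((hs γ' hγ').trans (hs γ hγ).symm) ((hsx γ' hγ').trans (hxa γ' hγ')) (ha γ' hγ') hle
    · exact Or.inl hle
  have hB : (a '' Γ).Countable := countable_of_countable_antichains_of_countable_comparables
    (fun M _ hM => τ.antichains_countable M fun _ hp _ hq hpq =>
      ⟨hM hp hq hpq, hM hq hp hpq.symm⟩) hcomp
  exact (hB.biUnion fun b _ => countable_Iio_of_lt_omega1 (τ.height_lt b)).mono fun γ hγ =>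
    mem_biUnion (mem_image_of_mem a hγ) (hγa γ hγ)

end SouslinTreeData

/-- In a Souslin tree with the interval topology, for every stationary
`S ⊆ ω₁` and every uncountable `A ⊆ T`, the closure of `A` meets level `γ`
of the tree for some `γ ∈ S`. -/
theorem souslin_tree_closure_meets_stationary_level {T : Type*} [PartialOrder T]
    (τ : SouslinTreeData T) (S : Set Ordinal) (hS : IsStationaryInOmega1 S)
    (A : Set T) (hA : ¬ A.Countable) :
    ∃ γ ∈ S, ((@closure T (intervalTopology T) A) ∩ {t : T | τ.height t = γ}).Nonempty := by
  by_contra! hmiss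
  have gap : ∀ γ ∈ S, 0 < γ → ∃ s x a, s < x ∧ x < a ∧ τ.height x = γ ∧ a ∈ A ∧
      Ioc s x ⊆ Aᶜ := by
    intro γ hγS hγ0
    obtain ⟨a, ha, hγa⟩ := τ.exists_lt_height_of_not_countable hA (hS.1 hγS)
    obtain ⟨x, hxa, hx⟩ := τ.pred_exists a γ hγa
    obtain ⟨s₀, hs₀, -⟩ := τ.pred_exists x 0 (hx ▸ hγ0)
    obtain ⟨s, hsx, hgap⟩ := τ.exists_Ioc_subset_compl_of_notMem_closure hs₀ fun hxA =>
      (hmiss γ hγS).subset ⟨hxA, hx⟩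
    exact ⟨s, x, a, hsx, hxa, hx, ha, hgap⟩
  have := τ.nonempty
  choose! s x a hsx hxa hx ha hgap using gap
  obtain ⟨β, hβ⟩ := hS.exists_isStationaryInOmega1_fiber (fun γ => τ.height (s γ))
    fun γ hγS hγ0 => (τ.height_mono _ _ (hsx γ hγS hγ0)).trans_eq (hx γ hγS hγ0)
  refine hβ.not_countable (τ.countable_of_forall_exists_Ioc_subset_compl (A := A) (β := β) ?_)
  rintro γ ⟨hγS, hγ0, rfl⟩
  exact ⟨s γ, x γ, a γ, rfl, hsx γ hγS hγ0, hxa γ hγS hγ0, hx γ hγS hγ0, ha γ hγS hγ0,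
    hgap γ hγS hγ0⟩
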